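/- Let ψ : [0,1) → ℝ satisfy the tempered distortion property. Then P(T, ψ) = sup{ P_B(T, ψ) : B a finite nonempty subset of ℕ }. -/

import Mathlib

open Real Filter Set MeasureTheory Topology ENNReal

/-- The Gauss map `T x = 1/x - ⌊1/x⌋`. -/
noncomputable def gaussMap (x : ℝ) : ℝ := 1 / x - (⌊1 / x⌋ : ℝ)

/-- The `n`-th partial quotient `a_n(x) = ⌊1 / T^{n-1} x⌋` (for `n ≥ 1`). -/
noncomputable def pQuot (n : ℕ) (x : ℝ) : ℤ := ⌊1 / gaussMap^[n - 1] x⌋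

/-- Birkhoff (ergodic) sum `S_n f (x) = f x + f (T x) + ⋯ + f (T^{n-1} x)`. -/
noncomputable def birkhoff (f : ℝ → ℝ) (n : ℕ) (x : ℝ) : ℝ :=
  ∑ k ∈ Finset.range n, f (gaussMap^[k] x)

/-- The value `[a_1, …, a_n + x] = 1/(a_1 + 1/(a_2 + ⋯ + 1/(a_n + x)))`. -/
noncomputable def cfVal : List ℕ → ℝ → ℝ
  | [], x => x
  | a :: l, x => 1 / ((a : ℝ) + cfVal l x)

/-- The set of positive natural numbers, playing the role of `ℕ = {1, 2, …}`. -/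
def posNats : Set ℕ := {n | 1 ≤ n}

/-- `Z_B`: the irrationals in `(0,1)` all of whose partial quotients lie in `B`. -/
def ZB (B : Set ℕ) : Set ℝ :=
  {x | x ∈ Ioo (0 : ℝ) 1 ∧ Irrational x ∧ ∀ n, 1 ≤ n → ∃ b ∈ B, pQuot n x = (b : ℤ)}

/-- `x` and `z` lie in the same cylinder of order `n`. -/
def sameCylinder (n : ℕ) (x z : ℝ) : Prop :=
  ∀ i, 1 ≤ i → i ≤ n → pQuot i x = pQuot i z

/-- The set of values `|ψ x - ψ z|` over pairs of irrationals in the same cylinder of order `n`. -/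
def varSet (ψ : ℝ → ℝ) (n : ℕ) : Set ℝ :=
  {v | ∃ x z : ℝ, x ∈ Ioo (0 : ℝ) 1 ∧ z ∈ Ioo (0 : ℝ) 1 ∧ Irrational x ∧ Irrational z ∧
    sameCylinder n x z ∧ v = |ψ x - ψ z|}

/-- The `n`-th variation `Var_n ψ`. -/
noncomputable def Varn (ψ : ℝ → ℝ) (n : ℕ) : ℝ := sSup (varSet ψ n)

/-- Tempered distortion property: `Var_1 ψ < ∞` and `Var_n ψ → 0`. -/
def TemperedDistortion (ψ : ℝ → ℝ) : Prop :=
  BddAbove (varSet ψ 1) ∧ Filter.Tendsto (Varn ψ) Filter.atTop (nhds 0)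

/-- The `n`-th partition sum `Σ_{a_1,…,a_n ∈ B} sup_{x ∈ Z_B} exp (S_n ψ ([a_1, …, a_n + x]))`. -/
noncomputable def pressureSum (B : Set ℕ) (ψ : ℝ → ℝ) (n : ℕ) : ℝ≥0∞ :=
  ∑' w : Fin n → B,
    ENNReal.ofReal (sSup {t | ∃ x ∈ ZB B,
      t = Real.exp (birkhoff ψ n (cfVal (List.ofFn fun i => ((w i : ℕ))) x))})

/-- The pressure function `P_B(T, ψ)`, as an extended real number. -/
noncomputable def pressure (B : Set ℕ) (ψ : ℝ → ℝ) : EReal :=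
  Filter.limsup (fun n : ℕ => (((n : ℝ)⁻¹ : ℝ) : EReal) * ENNReal.log (pressureSum B ψ n))
    Filter.atTop

/-- `g_r(s)`: `g_1(s) = s`, `g_r(s) = s g_{r-1}(s) / (1 - s + g_{r-1}(s))`. -/
noncomputable def gRec : ℕ → ℝ → ℝ
  | 0, s => s
  | 1, s => s
  | (r + 2), s => s * gRec (r + 1) s / (1 - s + gRec (r + 1) s)

/-- `log |T'(x)| = log (1/x²)` since the Gauss map has derivative `T'(x) = -1/x²`. -/
noncomputable def logAbsDerivGauss (x : ℝ) : ℝ := Real.log (1 / x ^ 2)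

/-- Convergent denominators `q_n(x)`: `q_0 = 1`, `q_1 = a_1`, `q_{n+1} = a_{n+1} q_n + q_{n-1}`. -/
noncomputable def qOf (x : ℝ) : ℕ → ℤ
  | 0 => 1
  | 1 => pQuot 1 x
  | (n + 2) => pQuot (n + 2) x * qOf x (n + 1) + qOf x n

/-- Convergent numerators `p_n(x)`: `p_0 = 0`, `p_1 = 1`, `p_{n+1} = a_{n+1} p_n + p_{n-1}`. -/
noncomputable def pOf (x : ℝ) : ℕ → ℤ
  | 0 => 0
  | 1 => 1
  | (n + 2) => pQuot (n + 2) x * pOf x (n + 1) + pOf x n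

/-- Continuant denominator `q_n(a_1,…,a_n)` built from a sequence `a` indexed from `1`. -/
def contQ (a : ℕ → ℕ) : ℕ → ℕ
  | 0 => 1
  | 1 => a 1
  | (n + 2) => a (n + 2) * contQ a (n + 1) + contQ a n

/-- Continuant numerator `p_n(a_1,…,a_n)` built from a sequence `a` indexed from `1`. -/
def contP (a : ℕ → ℕ) : ℕ → ℕ
  | 0 => 0
  | 1 => 1
  | (n + 2) => a (n + 2) * contP a (n + 1) + contP a n

section CF

lemma cfVal_cons (a : ℕ) (l : List ℕ) (x : ℝ) :
    cfVal (a :: l) x = 1 / ((a : ℝ) + cfVal l x) := rfl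

lemma cfVal_mem_Ioo {l : List ℕ} (hl : ∀ a ∈ l, 1 ≤ a) {x : ℝ} (hx : x ∈ Set.Ioo (0:ℝ) 1) :
    cfVal l x ∈ Set.Ioo (0:ℝ) 1 := by
  induction l with
  | nil => exact hx
  | cons a l ih =>
    have ha : (1:ℝ) ≤ a := by exact_mod_cast hl a (List.mem_cons_self)
    have ht := ih (fun b hb => hl b (List.mem_cons_of_mem _ hb))
    have h0 : (0:ℝ) < (a:ℝ) + cfVal l x := by linarith [ht.1]
    have h1 : (1:ℝ) < (a:ℝ) + cfVal l x := by linarith [ht.1]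
    rw [cfVal_cons]
    exact ⟨by positivity, by rw [div_lt_one h0]; exact h1⟩

lemma one_div_cfVal_cons {a : ℕ} {l : List ℕ} (hl : ∀ b ∈ l, 1 ≤ b) {x : ℝ}
    (hx : x ∈ Set.Ioo (0:ℝ) 1) :
    1 / cfVal (a :: l) x = (a : ℝ) + cfVal l x := by
  rw [cfVal_cons, one_div_one_div]

lemma floor_one_div_cfVal_cons {a : ℕ} {l : List ℕ} (hl : ∀ b ∈ l, 1 ≤ b) {x : ℝ}
    (hx : x ∈ Set.Ioo (0:ℝ) 1) :
    ⌊1 / cfVal (a :: l) x⌋ = (a : ℤ) := by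
  rw [one_div_cfVal_cons hl hx]
  have ht := cfVal_mem_Ioo hl hx
  rw [Int.floor_natCast_add, Int.floor_eq_zero_iff.2 ⟨le_of_lt ht.1, ht.2⟩, add_zero]

lemma gaussMap_cfVal_cons {a : ℕ} {l : List ℕ} (hl : ∀ b ∈ l, 1 ≤ b) {x : ℝ}
    (hx : x ∈ Set.Ioo (0:ℝ) 1) :
    gaussMap (cfVal (a :: l) x) = cfVal l x := by
  unfold gaussMap
  rw [one_div_cfVal_cons hl hx]
  have ht := cfVal_mem_Ioo hl hx
  rw [Int.floor_natCast_add, Int.floor_eq_zero_iff.2 ⟨le_of_lt ht.1, ht.2⟩]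
  push_cast; ring
lemma gaussMap_iterate_cfVal {l : List ℕ} (hl : ∀ b ∈ l, 1 ≤ b) {x : ℝ}
    (hx : x ∈ Set.Ioo (0:ℝ) 1) :
    ∀ k, k ≤ l.length → gaussMap^[k] (cfVal l x) = cfVal (l.drop k) x := by
  induction l with
  | nil =>
    intro k hk
    simp only [List.length_nil, Nat.le_zero] at hk
    subst hk
    simp
  | cons a l ih =>
    intro k hk
    match k with
    | 0 => simp
    | (j+1) =>
      rw [Function.iterate_succ_apply,
        gaussMap_cfVal_cons (fun b hb => hl b (List.mem_cons_of_mem _ hb)) hx]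
      have := ih (fun b hb => hl b (List.mem_cons_of_mem _ hb)) j
        (by simpa using Nat.lt_succ_iff.mp (Nat.lt_of_lt_of_le (Nat.lt_succ_self j) hk))
      simpa using this

lemma pQuot_cfVal {l : List ℕ} (hl : ∀ b ∈ l, 1 ≤ b) {x : ℝ} (hx : x ∈ Set.Ioo (0:ℝ) 1)
    {k : ℕ} (hk : k < l.length) :
    pQuot (k+1) (cfVal l x) = (l[k] : ℤ) := by
  unfold pQuot
  simp only [Nat.add_sub_cancel]
  rw [gaussMap_iterate_cfVal hl hx k (le_of_lt hk), List.drop_eq_getElem_cons hk]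
  exact floor_one_div_cfVal_cons
    (fun b hb => hl b (List.mem_of_mem_drop hb)) hx

lemma pQuot_cfVal_high {l : List ℕ} (hl : ∀ b ∈ l, 1 ≤ b) {x : ℝ}
    (hx : x ∈ Set.Ioo (0:ℝ) 1) {i : ℕ} (hi : l.length < i) :
    pQuot i (cfVal l x) = pQuot (i - l.length) x := by
  unfold pQuot
  have h1 : i - 1 = (i - l.length - 1) + l.length := by omega
  rw [h1, Function.iterate_add_apply,
    gaussMap_iterate_cfVal hl hx l.length le_rfl]
  simp [cfVal]

lemma irrational_cfVal {l : List ℕ} (hl : ∀ b ∈ l, 1 ≤ b) {x : ℝ} (hx : Irrational x) :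
    Irrational (cfVal l x) := by
  induction l with
  | nil => exact hx
  | cons a l ih =>
    have h := (ih (fun b hb => hl b (List.mem_cons_of_mem _ hb))).natCast_add a
    rw [cfVal_cons, one_div]
    exact h.inv

lemma cfVal_mem_ZB {B : Set ℕ} (hB : B ⊆ posNats) {l : List ℕ} (hl : ∀ b ∈ l, b ∈ B)
    {x : ℝ} (hx : x ∈ ZB B) : cfVal l x ∈ ZB B := by
  have hl1 : ∀ b ∈ l, 1 ≤ b := fun b hb => hB (hl b hb)
  obtain ⟨hxI, hxirr, hxq⟩ := hx
  refine ⟨cfVal_mem_Ioo hl1 hxI, irrational_cfVal hl1 hxirr, ?_⟩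
  intro n hn
  rcases lt_or_ge (n-1) l.length with h | h
  · refine ⟨l[n-1], hl _ (List.getElem_mem _), ?_⟩
    have hn' : n = (n-1)+1 := by omega
    conv_lhs => rw [hn']
    exact pQuot_cfVal hl1 hxI h
  · have hi : l.length < n := by omega
    rw [pQuot_cfVal_high hl1 hxI hi]
    exact hxq (n - l.length) (by omega)

lemma sameCylinder_cfVal {l : List ℕ} (hl : ∀ b ∈ l, 1 ≤ b) {x z : ℝ}
    (hx : x ∈ Set.Ioo (0:ℝ) 1) (hz : z ∈ Set.Ioo (0:ℝ) 1) :
    sameCylinder l.length (cfVal l x) (cfVal l z) := by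
  intro i h1 h2
  have hk : i - 1 < l.length := by omega
  have hi : i = (i-1)+1 := by omega
  rw [hi, pQuot_cfVal hl hx hk, pQuot_cfVal hl hz hk]

lemma cfVal_append (l m : List ℕ) (x : ℝ) :
    cfVal (l ++ m) x = cfVal l (cfVal m x) := by
  induction l with
  | nil => simp [cfVal]
  | cons a l ih => rw [List.cons_append, cfVal_cons, cfVal_cons, ih]
lemma ZB_nonempty {B : Set ℕ} (hB : B.Nonempty) (hBp : B ⊆ posNats) : (ZB B).Nonempty := by
  obtain ⟨b, hb⟩ := hB
  have hb1 : 1 ≤ b := hBp hb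
  have hb1' : (1:ℝ) ≤ b := by exact_mod_cast hb1
  set D : ℕ := b^2 + 4 with hD
  set x : ℝ := (Real.sqrt D - b)/2 with hxdef
  have hDnn : (0:ℝ) ≤ (D:ℝ) := by positivity
  have hsq : Real.sqrt D ^ 2 = (D:ℝ) := Real.sq_sqrt hDnn
  have hDcast : (D:ℝ) = (b:ℝ)^2 + 4 := by rw [hD]; push_cast; ring
  have hlb : (b:ℝ) < Real.sqrt D := by
    nlinarith [Real.sqrt_nonneg (D:ℝ)]
  have hub : Real.sqrt D < (b:ℝ) + 2 := by
    nlinarith [Real.sqrt_nonneg (D:ℝ)]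
  have hxI : x ∈ Set.Ioo (0:ℝ) 1 := by
    constructor
    · rw [hxdef]; linarith
    · rw [hxdef]; linarith
  have hxpos : 0 < x := hxI.1
  have hquad : x * ((b:ℝ) + x) = 1 := by
    rw [hxdef]
    nlinarith
  have hinv : 1 / x = (b:ℝ) + x := by
    field_simp
    linarith [hquad]
  have hirr : Irrational x := by
    have hns : ¬ IsSquare D := by
      rintro ⟨r, hr⟩
      have h1 : b < r := by nlinarith
      have h2 : r < b + 2 := by nlinarith
      have h3 : r = b + 1 := by omega
      rw [h3] at hr
      rw [hD] at hr
      have hr3 : 4 = 2 * b + 1 := by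
        have h5 : b ^ 2 + 4 = b ^ 2 + (2 * b + 1) := by rw [hr]; ring
        exact Nat.add_left_cancel h5
      omega
    have h1 : Irrational (Real.sqrt D) := irrational_sqrt_natCast_iff.2 hns
    have h2 : Irrational (Real.sqrt D - b) := by
      have := h1.sub_intCast (b : ℤ)
      simpa using this
    have := h2.div_intCast (m := 2) (by norm_num)
    simpa [hxdef] using this
  have hfloor : ⌊1 / x⌋ = (b:ℤ) := by
    rw [hinv, Int.floor_natCast_add, Int.floor_eq_zero_iff.2 ⟨le_of_lt hxI.1, hxI.2⟩, add_zero]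
  have hfix : gaussMap x = x := by
    unfold gaussMap
    rw [hinv, Int.floor_natCast_add, Int.floor_eq_zero_iff.2 ⟨le_of_lt hxI.1, hxI.2⟩]
    push_cast; ring
  refine ⟨x, hxI, hirr, fun n hn => ⟨b, hb, ?_⟩⟩
  unfold pQuot
  rw [Function.iterate_fixed hfix]
  exact hfloor
lemma varSet_subset (ψ : ℝ → ℝ) {n : ℕ} (hn : 1 ≤ n) : varSet ψ n ⊆ varSet ψ 1 := by
  rintro v ⟨x, z, hx, hz, hxi, hzi, hc, hv⟩
  exact ⟨x, z, hx, hz, hxi, hzi, fun i h1 h2 => hc i h1 (h2.trans hn), hv⟩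

lemma bddAbove_varSet {ψ : ℝ → ℝ} (htd : TemperedDistortion ψ) {n : ℕ} (hn : 1 ≤ n) :
    BddAbove (varSet ψ n) :=
  htd.1.mono (varSet_subset ψ hn)

lemma abs_le_Varn {ψ : ℝ → ℝ} (htd : TemperedDistortion ψ) {n : ℕ} (hn : 1 ≤ n)
    {x z : ℝ} (hx : x ∈ Set.Ioo (0:ℝ) 1) (hz : z ∈ Set.Ioo (0:ℝ) 1)
    (hxi : Irrational x) (hzi : Irrational z) (hc : sameCylinder n x z) :
    |ψ x - ψ z| ≤ Varn ψ n :=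
  le_csSup (bddAbove_varSet htd hn) ⟨x, z, hx, hz, hxi, hzi, hc, rfl⟩

lemma Varn_nonneg {ψ : ℝ → ℝ} (htd : TemperedDistortion ψ) {n : ℕ} (hn : 1 ≤ n) :
    0 ≤ Varn ψ n := by
  obtain ⟨x, hxI, hxirr, -⟩ := ZB_nonempty (B := {1}) ⟨1, rfl⟩ (by intro a ha; simp_all [posNats])
  have h := abs_le_Varn htd hn hxI hxI hxirr hxirr (fun i _ _ => rfl)
  simpa using h

lemma Vsum_nonneg {ψ : ℝ → ℝ} (htd : TemperedDistortion ψ) (n : ℕ) :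
    0 ≤ ∑ j ∈ Finset.range n, Varn ψ (j+1) :=
  Finset.sum_nonneg fun j _ => Varn_nonneg htd (by omega)

lemma birkhoff_comparison {ψ : ℝ → ℝ} (htd : TemperedDistortion ψ) {l : List ℕ}
    (hl : ∀ b ∈ l, 1 ≤ b) {x z : ℝ}
    (hx : x ∈ Set.Ioo (0:ℝ) 1) (hz : z ∈ Set.Ioo (0:ℝ) 1)
    (hxi : Irrational x) (hzi : Irrational z) :
    birkhoff ψ l.length (cfVal l x) - birkhoff ψ l.length (cfVal l z)
      ≤ ∑ j ∈ Finset.range l.length, Varn ψ (j+1) := by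
  set n := l.length with hn
  unfold birkhoff
  rw [← Finset.sum_sub_distrib]
  have step : ∀ k ∈ Finset.range n,
      ψ (gaussMap^[k] (cfVal l x)) - ψ (gaussMap^[k] (cfVal l z)) ≤ Varn ψ (n - k) := by
    intro k hk
    have hkn : k < n := Finset.mem_range.mp hk
    rw [gaussMap_iterate_cfVal hl hx k hkn.le, gaussMap_iterate_cfVal hl hz k hkn.le]
    have hld : ∀ b ∈ l.drop k, 1 ≤ b := fun b hb => hl b (List.mem_of_mem_drop hb)
    have hlen : (l.drop k).length = n - k := by simp [hn]
    have hcyl : sameCylinder (n - k) (cfVal (l.drop k) x) (cfVal (l.drop k) z) := by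
      rw [← hlen]; exact sameCylinder_cfVal hld hx hz
    have := abs_le_Varn htd (by omega) (cfVal_mem_Ioo hld hx) (cfVal_mem_Ioo hld hz)
      (irrational_cfVal hld hxi) (irrational_cfVal hld hzi) hcyl
    exact (le_abs_self _).trans this
  refine le_trans (Finset.sum_le_sum step) (le_of_eq ?_)
  have h := Finset.sum_range_reflect (fun k => Varn ψ (k+1)) n
  rw [← h]
  apply Finset.sum_congr rfl
  intro j hj
  have hj' : j < n := Finset.mem_range.mp hj
  congr 1
  omega
/-- The supremum set appearing in `pressureSum`, for a word given as a list. -/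
def SW (ψ : ℝ → ℝ) (B : Set ℕ) (l : List ℕ) : Set ℝ :=
  {t | ∃ x ∈ ZB B, t = Real.exp (birkhoff ψ l.length (cfVal l x))}

lemma SW_nonempty {ψ : ℝ → ℝ} {B : Set ℕ} (hB : (ZB B).Nonempty) (l : List ℕ) :
    (SW ψ B l).Nonempty := by
  obtain ⟨z, hz⟩ := hB
  exact ⟨_, z, hz, rfl⟩

lemma SW_pos {ψ : ℝ → ℝ} {B : Set ℕ} {l : List ℕ} {t : ℝ} (ht : t ∈ SW ψ B l) : 0 < t := by
  obtain ⟨x, hx, rfl⟩ := ht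
  exact Real.exp_pos _

lemma SW_bound {ψ : ℝ → ℝ} (htd : TemperedDistortion ψ) {B : Set ℕ} (hB : B ⊆ posNats)
    {l : List ℕ} (hl : ∀ b ∈ l, 1 ≤ b) {z : ℝ} (hz : z ∈ ZB B)
    {t : ℝ} (ht : t ∈ SW ψ B l) :
    t ≤ Real.exp (birkhoff ψ l.length (cfVal l z)
        + ∑ j ∈ Finset.range l.length, Varn ψ (j+1)) := by
  obtain ⟨x, hx, rfl⟩ := ht
  apply Real.exp_le_exp.2
  have := birkhoff_comparison htd hl hx.1 hz.1 hx.2.1 hz.2.1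
  linarith

lemma SW_bddAbove {ψ : ℝ → ℝ} (htd : TemperedDistortion ψ) {B : Set ℕ} (hB : B ⊆ posNats)
    {l : List ℕ} (hl : ∀ b ∈ l, 1 ≤ b) (hBne : (ZB B).Nonempty) :
    BddAbove (SW ψ B l) := by
  obtain ⟨z, hz⟩ := hBne
  exact ⟨_, fun t ht => SW_bound htd hB hl hz ht⟩

lemma le_sSup_SW {ψ : ℝ → ℝ} (htd : TemperedDistortion ψ) {B : Set ℕ} (hB : B ⊆ posNats)
    {l : List ℕ} (hl : ∀ b ∈ l, 1 ≤ b) {z : ℝ} (hz : z ∈ ZB B) :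
    Real.exp (birkhoff ψ l.length (cfVal l z)) ≤ sSup (SW ψ B l) :=
  le_csSup (SW_bddAbove htd hB hl ⟨z, hz⟩) ⟨z, hz, rfl⟩

lemma sSup_SW_pos {ψ : ℝ → ℝ} (htd : TemperedDistortion ψ) {B : Set ℕ} (hB : B ⊆ posNats)
    {l : List ℕ} (hl : ∀ b ∈ l, 1 ≤ b) (hBne : (ZB B).Nonempty) :
    0 < sSup (SW ψ B l) := by
  obtain ⟨z, hz⟩ := hBne
  exact lt_of_lt_of_le (Real.exp_pos _) (le_sSup_SW htd hB hl hz)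

lemma ZB_mono {B B' : Set ℕ} (h : B ⊆ B') : ZB B ⊆ ZB B' := by
  rintro x ⟨h1, h2, h3⟩
  exact ⟨h1, h2, fun n hn => by obtain ⟨b, hb, hb'⟩ := h3 n hn; exact ⟨b, h hb, hb'⟩⟩

lemma sSup_SW_mono {ψ : ℝ → ℝ} (htd : TemperedDistortion ψ) {B B' : Set ℕ}
    (hBB' : B ⊆ B') (hB' : B' ⊆ posNats) (hBne : (ZB B).Nonempty)
    {l : List ℕ} (hl : ∀ b ∈ l, 1 ≤ b) :
    sSup (SW ψ B l) ≤ sSup (SW ψ B' l) := by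
  apply csSup_le_csSup (SW_bddAbove htd hB' hl (hBne.imp (fun _ hx => ZB_mono hBB' hx)))
    (SW_nonempty hBne l)
  rintro t ⟨x, hx, rfl⟩
  exact ⟨x, ZB_mono hBB' hx, rfl⟩

lemma sSup_SW_posNats_le {ψ : ℝ → ℝ} (htd : TemperedDistortion ψ) {B : Set ℕ}
    (hB : B ⊆ posNats) (hBne : (ZB B).Nonempty) {l : List ℕ} (hl : ∀ b ∈ l, 1 ≤ b) :
    sSup (SW ψ posNats l)
      ≤ Real.exp (∑ j ∈ Finset.range l.length, Varn ψ (j+1)) * sSup (SW ψ B l) := by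
  obtain ⟨z, hz⟩ := hBne
  have hZN : (ZB posNats).Nonempty := ⟨z, ZB_mono hB hz⟩
  apply csSup_le (SW_nonempty hZN l)
  rintro t ⟨x, hx, rfl⟩
  have hcomp := birkhoff_comparison htd hl hx.1 hz.1 hx.2.1 hz.2.1
  have h1 : Real.exp (birkhoff ψ l.length (cfVal l x))
      ≤ Real.exp (∑ j ∈ Finset.range l.length, Varn ψ (j+1))
        * Real.exp (birkhoff ψ l.length (cfVal l z)) := by
    rw [← Real.exp_add]
    apply Real.exp_le_exp.2
    linarith
  refine h1.trans ?_
  exact mul_le_mul_of_nonneg_left (le_sSup_SW htd hB hl hz) (Real.exp_nonneg _)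
lemma birkhoff_cfVal_append {ψ : ℝ → ℝ} {l m : List ℕ}
    (hl : ∀ b ∈ l, 1 ≤ b) (hm : ∀ b ∈ m, 1 ≤ b) {z : ℝ} (hz : z ∈ Set.Ioo (0:ℝ) 1) :
    birkhoff ψ (l.length + m.length) (cfVal (l ++ m) z)
      = birkhoff ψ l.length (cfVal l (cfVal m z)) + birkhoff ψ m.length (cfVal m z) := by
  have hz' : cfVal m z ∈ Set.Ioo (0:ℝ) 1 := cfVal_mem_Ioo hm hz
  unfold birkhoff
  rw [Finset.sum_range_add]
  congr 1
  · rw [cfVal_append]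
  · apply Finset.sum_congr rfl
    intro k hk
    rw [add_comm l.length k, Function.iterate_add_apply, cfVal_append,
      gaussMap_iterate_cfVal hl hz' l.length le_rfl]
    simp [cfVal]

lemma sSup_SW_superadd {ψ : ℝ → ℝ} (htd : TemperedDistortion ψ) {B : Set ℕ}
    (hB : B ⊆ posNats) (hBne : (ZB B).Nonempty)
    {l m : List ℕ} (hl : ∀ b ∈ l, 1 ≤ b) (hm : ∀ b ∈ m, 1 ≤ b) :
    sSup (SW ψ B l) * sSup (SW ψ B m)
      ≤ Real.exp (∑ j ∈ Finset.range l.length, Varn ψ (j+1)) * sSup (SW ψ B (l ++ m)) := by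
  set V : ℝ := ∑ j ∈ Finset.range l.length, Varn ψ (j+1) with hV
  have hlm : ∀ b ∈ l ++ m, 1 ≤ b := by
    intro b hb
    rcases List.mem_append.mp hb with h | h
    · exact hl b h
    · exact hm b h
  set S : ℝ := sSup (SW ψ B (l ++ m)) with hS
  have hSpos : 0 < S := sSup_SW_pos htd hB hlm hBne
  have key : ∀ t ∈ SW ψ B l, ∀ s ∈ SW ψ B m, t * s ≤ Real.exp V * S := by
    rintro t ⟨x, hx, rfl⟩ s ⟨z, hz, rfl⟩
    have hz' : cfVal m z ∈ Set.Ioo (0:ℝ) 1 := cfVal_mem_Ioo hm hz.1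
    have hz'i : Irrational (cfVal m z) := irrational_cfVal hm hz.2.1
    have hcomp := birkhoff_comparison htd hl hx.1 hz' hx.2.1 hz'i
    have hsplit := birkhoff_cfVal_append (ψ := ψ) hl hm hz.1
    have hmem : Real.exp (birkhoff ψ (l ++ m).length (cfVal (l ++ m) z)) ≤ S :=
      le_sSup_SW htd hB hlm hz
    rw [List.length_append, hsplit] at hmem
    calc Real.exp (birkhoff ψ l.length (cfVal l x)) * Real.exp (birkhoff ψ m.length (cfVal m z))
        = Real.exp (birkhoff ψ l.length (cfVal l x) + birkhoff ψ m.length (cfVal m z)) := by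
          rw [Real.exp_add]
      _ ≤ Real.exp (V + (birkhoff ψ l.length (cfVal l (cfVal m z))
            + birkhoff ψ m.length (cfVal m z))) := by
          apply Real.exp_le_exp.2; linarith
      _ = Real.exp V * Real.exp (birkhoff ψ l.length (cfVal l (cfVal m z))
            + birkhoff ψ m.length (cfVal m z)) := Real.exp_add _ _
      _ ≤ Real.exp V * S := mul_le_mul_of_nonneg_left hmem (Real.exp_nonneg _)
  have hC : 0 < sSup (SW ψ B m) := sSup_SW_pos htd hB hm hBne
  have h1 : ∀ t ∈ SW ψ B l, t * sSup (SW ψ B m) ≤ Real.exp V * S := by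
    intro t ht
    have ht0 : 0 < t := SW_pos ht
    have h2 : sSup (SW ψ B m) ≤ (Real.exp V * S) / t := by
      apply csSup_le (SW_nonempty hBne m)
      intro s hs
      rw [le_div_iff₀ ht0, mul_comm]
      exact key t ht s hs
    calc t * sSup (SW ψ B m) ≤ t * ((Real.exp V * S) / t) :=
          mul_le_mul_of_nonneg_left h2 ht0.le
      _ = Real.exp V * S := by field_simp
  have h3 : sSup (SW ψ B l) ≤ (Real.exp V * S) / sSup (SW ψ B m) := by
    apply csSup_le (SW_nonempty hBne l)
    intro t ht
    rw [le_div_iff₀ hC]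
    exact h1 t ht
  rw [← le_div_iff₀ hC]
  exact h3
lemma pressureSum_eq (B : Set ℕ) (ψ : ℝ → ℝ) (n : ℕ) :
    pressureSum B ψ n
      = ∑' w : Fin n → B,
          ENNReal.ofReal (sSup (SW ψ B (List.ofFn fun i => ((w i : ℕ))))) := by
  unfold pressureSum SW
  congr 1
  funext w
  congr 2
  simp only [List.length_ofFn]

lemma letters_ofFn_pos {B : Set ℕ} (hB : B ⊆ posNats) {n : ℕ} (w : Fin n → B) :
    ∀ b ∈ List.ofFn (fun i => ((w i : ℕ))), 1 ≤ b := by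
  intro b hb
  rw [List.mem_ofFn] at hb
  obtain ⟨i, rfl⟩ := hb
  exact hB (w i).2

lemma letters_ofFn_mem {B : Set ℕ} {n : ℕ} (w : Fin n → B) :
    ∀ b ∈ List.ofFn (fun i => ((w i : ℕ))), b ∈ B := by
  intro b hb
  rw [List.mem_ofFn] at hb
  obtain ⟨i, rfl⟩ := hb
  exact (w i).2

lemma pressureSum_pos {ψ : ℝ → ℝ} (htd : TemperedDistortion ψ) {B : Set ℕ}
    (hB : B ⊆ posNats) (hBne : B.Nonempty) (n : ℕ) :
    0 < pressureSum B ψ n := by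
  obtain ⟨b, hb⟩ := hBne
  have hZne : (ZB B).Nonempty := ZB_nonempty ⟨b, hb⟩ hB
  rw [pressureSum_eq]
  set w0 : Fin n → B := fun _ => ⟨b, hb⟩ with hw0
  have hterm : 0 < ENNReal.ofReal (sSup (SW ψ B (List.ofFn fun i => ((w0 i : ℕ))))) := by
    rw [ENNReal.ofReal_pos]
    exact sSup_SW_pos htd hB (letters_ofFn_pos hB w0) hZne
  exact lt_of_lt_of_le hterm (ENNReal.le_tsum w0)

lemma pressureSum_ne_top {ψ : ℝ → ℝ} {B : Set ℕ} (hBfin : B.Finite) (n : ℕ) :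
    pressureSum B ψ n ≠ ⊤ := by
  haveI : Fintype B := hBfin.fintype
  unfold pressureSum
  rw [tsum_fintype]
  exact (ENNReal.sum_lt_top.2 fun w _ => ENNReal.ofReal_lt_top).ne

lemma ofFn_val_append {B : Set ℕ} {n m : ℕ} (w : Fin n → B) (u : Fin m → B) :
    (List.ofFn fun i => (Fin.append w u i).val)
      = (List.ofFn fun i => ((w i : ℕ))) ++ (List.ofFn fun i => ((u i : ℕ))) := by
  rw [List.ofFn_add]
  simp [Fin.append_left, Fin.append_right]

lemma fin_append_injective {α : Type*} {n m : ℕ} :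
    Function.Injective (fun p : (Fin n → α) × (Fin m → α) => Fin.append p.1 p.2) := by
  rintro ⟨w, u⟩ ⟨w', u'⟩ h
  simp only at h
  refine Prod.ext (funext fun i => ?_) (funext fun i => ?_)
  · have := congrFun h (Fin.castAdd m i)
    simpa [Fin.append_left] using this
  · have := congrFun h (Fin.natAdd n i)
    simpa [Fin.append_right] using this

lemma pressureSum_superadd {ψ : ℝ → ℝ} (htd : TemperedDistortion ψ) {B : Set ℕ}
    (hB : B ⊆ posNats) (hBne : B.Nonempty) (n m : ℕ) :
    pressureSum B ψ n * pressureSum B ψ m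
      ≤ ENNReal.ofReal (Real.exp (∑ j ∈ Finset.range n, Varn ψ (j+1)))
        * pressureSum B ψ (n + m) := by
  have hZne : (ZB B).Nonempty := ZB_nonempty hBne hB
  rw [pressureSum_eq, pressureSum_eq, pressureSum_eq]
  set F : (Fin n → B) → ℝ≥0∞ :=
    fun w => ENNReal.ofReal (sSup (SW ψ B (List.ofFn fun i => ((w i : ℕ))))) with hF
  set G : (Fin m → B) → ℝ≥0∞ :=
    fun u => ENNReal.ofReal (sSup (SW ψ B (List.ofFn fun i => ((u i : ℕ))))) with hG
  set H : (Fin (n + m) → B) → ℝ≥0∞ :=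
    fun v => ENNReal.ofReal (sSup (SW ψ B (List.ofFn fun i => ((v i : ℕ))))) with hH
  have step1 : (∑' w, F w) * (∑' u, G u) = ∑' w, ∑' u, F w * G u := by
    rw [← ENNReal.tsum_mul_right]
    congr 1
    funext w
    rw [← ENNReal.tsum_mul_left]
  rw [step1]
  have step2 : ∀ w u, F w * G u
      ≤ ENNReal.ofReal (Real.exp (∑ j ∈ Finset.range n, Varn ψ (j+1)))
        * H (Fin.append w u) := by
    intro w u
    rw [hF, hG, hH]
    simp only
    rw [← ENNReal.ofReal_mul (le_of_lt (sSup_SW_pos htd hB (letters_ofFn_pos hB w) hZne)),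
      ← ENNReal.ofReal_mul (Real.exp_nonneg _)]
    apply ENNReal.ofReal_le_ofReal
    rw [ofFn_val_append]
    have h := sSup_SW_superadd htd hB hZne (letters_ofFn_pos hB w) (letters_ofFn_pos hB u)
    simpa [List.length_ofFn] using h
  calc ∑' w, ∑' u, F w * G u
      ≤ ∑' w, ∑' u, ENNReal.ofReal (Real.exp (∑ j ∈ Finset.range n, Varn ψ (j+1)))
          * H (Fin.append w u) :=
        ENNReal.tsum_le_tsum fun w => ENNReal.tsum_le_tsum fun u => step2 w u
    _ = ENNReal.ofReal (Real.exp (∑ j ∈ Finset.range n, Varn ψ (j+1)))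
          * ∑' w, ∑' u, H (Fin.append w u) := by
        rw [← ENNReal.tsum_mul_left]
        congr 1
        funext w
        rw [← ENNReal.tsum_mul_left]
    _ ≤ ENNReal.ofReal (Real.exp (∑ j ∈ Finset.range n, Varn ψ (j+1)))
          * ∑' v, H v := by
        apply mul_le_mul_right
        rw [← ENNReal.tsum_prod]
        exact ENNReal.tsum_comp_le_tsum_of_injective fin_append_injective H
lemma partialSum_le {ψ : ℝ → ℝ} (htd : TemperedDistortion ψ) (n : ℕ)
    (F : Finset (Fin n → posNats)) :
    ∃ B : Set ℕ, B.Finite ∧ B.Nonempty ∧ B ⊆ posNats ∧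
      ∑ w ∈ F, ENNReal.ofReal (sSup (SW ψ posNats (List.ofFn fun i => (w i).val)))
        ≤ ENNReal.ofReal (Real.exp (∑ j ∈ Finset.range n, Varn ψ (j+1)))
          * pressureSum B ψ n := by
  classical
  set B₀ : Finset ℕ :=
    insert 1 (F.biUnion fun w => Finset.image (fun i => (w i).val) Finset.univ) with hB₀
  set B : Set ℕ := ↑B₀ with hBdef
  have h1B : (1 : ℕ) ∈ B := by
    simp [hBdef, hB₀]
  have hBfin : B.Finite := B₀.finite_toSet
  have hBne : B.Nonempty := ⟨1, h1B⟩
  have hBsub : B ⊆ posNats := by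
    intro b hb
    simp only [hBdef, hB₀, Finset.coe_insert, Set.mem_insert_iff, Finset.coe_biUnion,
      Set.mem_iUnion, Finset.mem_coe, Finset.mem_image, Finset.mem_univ, true_and] at hb
    rcases hb with rfl | ⟨w, hw, i, rfl⟩
    · exact le_refl 1
    · exact (w i).2
  have hmemB : ∀ w ∈ F, ∀ i, (w i).val ∈ B := by
    intro w hw i
    simp only [hBdef, hB₀, Finset.coe_insert, Set.mem_insert_iff, Finset.coe_biUnion,
      Set.mem_iUnion, Finset.mem_coe, Finset.mem_image, Finset.mem_univ, true_and]
    exact Or.inr ⟨w, hw, i, rfl⟩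
  have hZBne : (ZB B).Nonempty := ZB_nonempty hBne hBsub
  refine ⟨B, hBfin, hBne, hBsub, ?_⟩
  set ρ : (Fin n → posNats) → (Fin n → B) := fun w i =>
    if h : (w i).val ∈ B then ⟨(w i).val, h⟩ else ⟨1, h1B⟩ with hρ
  have hρval : ∀ w ∈ F, ∀ i, ((ρ w i : ℕ)) = (w i).val := by
    intro w hw i
    simp [hρ, dif_pos (hmemB w hw i)]
  have hρinj : Set.InjOn ρ F := by
    intro w hw w' hw' h
    funext i
    apply Subtype.ext
    rw [← hρval w hw i, ← hρval w' hw' i, h]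
  have hlist : ∀ w ∈ F, (List.ofFn fun i => ((ρ w i : ℕ))) = List.ofFn fun i => (w i).val := by
    intro w hw
    congr 1
    funext i
    exact hρval w hw i
  calc ∑ w ∈ F, ENNReal.ofReal (sSup (SW ψ posNats (List.ofFn fun i => (w i).val)))
      ≤ ∑ w ∈ F, ENNReal.ofReal (Real.exp (∑ j ∈ Finset.range n, Varn ψ (j+1))
          * sSup (SW ψ B (List.ofFn fun i => (w i).val))) := by
        apply Finset.sum_le_sum
        intro w hw
        apply ENNReal.ofReal_le_ofReal
        have hl : ∀ b ∈ (List.ofFn fun i => (w i).val), 1 ≤ b := by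
          intro b hb
          rw [List.mem_ofFn] at hb
          obtain ⟨i, rfl⟩ := hb
          exact (w i).2
        have := sSup_SW_posNats_le htd hBsub hZBne hl
        simpa [List.length_ofFn] using this
    _ = ENNReal.ofReal (Real.exp (∑ j ∈ Finset.range n, Varn ψ (j+1)))
          * ∑ w ∈ F, ENNReal.ofReal (sSup (SW ψ B (List.ofFn fun i => (w i).val))) := by
        rw [Finset.mul_sum]
        apply Finset.sum_congr rfl
        intro w hw
        rw [← ENNReal.ofReal_mul (Real.exp_nonneg _)]
    _ ≤ ENNReal.ofReal (Real.exp (∑ j ∈ Finset.range n, Varn ψ (j+1)))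
          * pressureSum B ψ n := by
        apply mul_le_mul_right
        rw [pressureSum_eq]
        have heq : ∑ w ∈ F, ENNReal.ofReal (sSup (SW ψ B (List.ofFn fun i => (w i).val)))
            = ∑ w ∈ F, ENNReal.ofReal (sSup (SW ψ B (List.ofFn fun i => ((ρ w i : ℕ))))) := by
          apply Finset.sum_congr rfl
          intro w hw
          rw [hlist w hw]
        rw [heq]
        have heq2 : ∑ w ∈ F, ENNReal.ofReal (sSup (SW ψ B (List.ofFn fun i => ((ρ w i : ℕ)))))
            = ∑ v ∈ F.image ρ, ENNReal.ofReal (sSup (SW ψ B (List.ofFn fun i => ((v i : ℕ))))) := by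
          rw [Finset.sum_image (fun w hw w' hw' h => hρinj hw hw' h)]
        rw [heq2]
        exact ENNReal.sum_le_tsum _
section FiniteB

variable {ψ : ℝ → ℝ} (htd : TemperedDistortion ψ) {B : Set ℕ}
  (hBfin : B.Finite) (hBne : B.Nonempty) (hBsub : B ⊆ posNats)

/-- `log` of the partition sum, as a real number, for finite `B`. -/
noncomputable def aB (ψ : ℝ → ℝ) (B : Set ℕ) (n : ℕ) : ℝ :=
  Real.log (pressureSum B ψ n).toReal

include htd hBfin hBne hBsub

lemma toReal_pressureSum_pos (n : ℕ) : 0 < (pressureSum B ψ n).toReal :=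
  ENNReal.toReal_pos (pressureSum_pos htd hBsub hBne n).ne' (pressureSum_ne_top hBfin n)

lemma log_pressureSum_eq (n : ℕ) :
    ENNReal.log (pressureSum B ψ n) = (aB ψ B n : EReal) := by
  conv_lhs => rw [← ENNReal.ofReal_toReal (pressureSum_ne_top (ψ := ψ) hBfin n)]
  rw [ENNReal.log_ofReal_of_pos (toReal_pressureSum_pos htd hBfin hBne hBsub n)]
  rfl

lemma aB_superadd (n m : ℕ) :
    aB ψ B n + aB ψ B m - ∑ j ∈ Finset.range n, Varn ψ (j+1) ≤ aB ψ B (n + m) := by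
  have h := pressureSum_superadd htd hBsub hBne n m
  have hne : (ENNReal.ofReal (Real.exp (∑ j ∈ Finset.range n, Varn ψ (j+1)))
      * pressureSum B ψ (n + m)) ≠ ⊤ :=
    ENNReal.mul_ne_top ENNReal.ofReal_ne_top (pressureSum_ne_top hBfin _)
  have h2 := ENNReal.toReal_le_toReal (by
      exact ENNReal.mul_ne_top (pressureSum_ne_top hBfin _) (pressureSum_ne_top hBfin _)) hne
    |>.mpr h
  rw [ENNReal.toReal_mul, ENNReal.toReal_mul, ENNReal.toReal_ofReal (Real.exp_nonneg _)] at h2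
  have hp1 := toReal_pressureSum_pos htd hBfin hBne hBsub n
  have hp2 := toReal_pressureSum_pos htd hBfin hBne hBsub m
  have hp3 := toReal_pressureSum_pos htd hBfin hBne hBsub (n + m)
  have h3 := Real.log_le_log (by positivity) h2
  rw [Real.log_mul hp1.ne' hp2.ne', Real.log_mul (Real.exp_pos _).ne' hp3.ne',
    Real.log_exp] at h3
  unfold aB
  linarith

lemma aB_iterate {n : ℕ} : ∀ k : ℕ, 1 ≤ k →
    (k : ℝ) * (aB ψ B n - ∑ j ∈ Finset.range n, Varn ψ (j+1)) ≤ aB ψ B (k * n) := by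
  intro k hk
  induction k with
  | zero => omega
  | succ k ih =>
    rcases Nat.eq_or_lt_of_le hk with h | h
    · have hk0 : k = 0 := by omega
      subst hk0
      have hV := Vsum_nonneg htd (ψ := ψ) n
      simp only [zero_add, one_mul, Nat.cast_one]
      linarith
    · have hk1 : 1 ≤ k := by omega
      have ih' := ih hk1
      have hsup := aB_superadd htd hBfin hBne hBsub n (k * n)
      have hkn : (k + 1) * n = n + k * n := by ring
      rw [hkn]
      push_cast
      linarith

lemma pressure_ge (n : ℕ) (hn : 1 ≤ n) :
    (((aB ψ B n - ∑ j ∈ Finset.range n, Varn ψ (j+1)) / n : ℝ) : EReal)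
      ≤ pressure B ψ := by
  apply Filter.le_limsup_of_frequently_le'
  rw [Filter.frequently_atTop]
  intro K
  set k := max K 1 with hkdef
  have hk1 : 1 ≤ k := le_max_right _ _
  refine ⟨k * n, ?_, ?_⟩
  · calc K ≤ k := le_max_left _ _
      _ = k * 1 := (mul_one k).symm
      _ ≤ k * n := Nat.mul_le_mul_left k hn
  · rw [log_pressureSum_eq htd hBfin hBne hBsub]
    have hcoe : (((((k * n : ℕ) : ℝ)⁻¹ : ℝ) : EReal)) * ((aB ψ B (k * n) : ℝ) : EReal)
        = ((((k * n : ℕ) : ℝ)⁻¹ * aB ψ B (k * n) : ℝ) : EReal) := by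
      rw [EReal.coe_mul]
    rw [hcoe, EReal.coe_le_coe_iff]
    have hmn : (0:ℝ) < ((k * n : ℕ) : ℝ) := by
      have : 1 ≤ k * n := by
        calc 1 = 1 * 1 := by ring
          _ ≤ k * n := Nat.mul_le_mul hk1 hn
      exact_mod_cast Nat.lt_of_lt_of_le Nat.zero_lt_one this
    have hit := aB_iterate htd hBfin hBne hBsub (n := n) k hk1
    have hn0 : (0:ℝ) < (n:ℝ) := by exact_mod_cast hn
    have hk0 : (0:ℝ) < (k:ℝ) := by exact_mod_cast hk1
    have h1 : (((k * n : ℕ) : ℝ))⁻¹ * ((k:ℝ) * (aB ψ B n - ∑ j ∈ Finset.range n, Varn ψ (j+1)))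
        ≤ (((k * n : ℕ) : ℝ))⁻¹ * aB ψ B (k * n) :=
      mul_le_mul_of_nonneg_left hit (inv_nonneg.2 hmn.le)
    have h2 : (((k * n : ℕ) : ℝ))⁻¹ * ((k:ℝ) * (aB ψ B n - ∑ j ∈ Finset.range n, Varn ψ (j+1)))
        = (aB ψ B n - ∑ j ∈ Finset.range n, Varn ψ (j+1)) / n := by
      push_cast
      field_simp
    linarith

end FiniteB
lemma pressureSum_le_posNats {ψ : ℝ → ℝ} (htd : TemperedDistortion ψ) {B : Set ℕ}
    (hBne : B.Nonempty) (hBsub : B ⊆ posNats) (n : ℕ) :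
    pressureSum B ψ n ≤ pressureSum posNats ψ n := by
  rw [pressureSum_eq, pressureSum_eq]
  have hZBne : (ZB B).Nonempty := ZB_nonempty hBne hBsub
  set ι : (Fin n → B) → (Fin n → posNats) := fun w i => ⟨(w i).val, hBsub (w i).2⟩ with hι
  have hιinj : Function.Injective ι := by
    intro w w' h
    funext i
    apply Subtype.ext
    have := congrFun h i
    simpa [hι] using congrArg Subtype.val this
  calc ∑' w : Fin n → B, ENNReal.ofReal (sSup (SW ψ B (List.ofFn fun i => ((w i : ℕ)))))
      ≤ ∑' w : Fin n → B,
          ENNReal.ofReal (sSup (SW ψ posNats (List.ofFn fun i => ((ι w i : ℕ))))) := by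
        apply ENNReal.tsum_le_tsum
        intro w
        apply ENNReal.ofReal_le_ofReal
        have hll : (List.ofFn fun i => ((ι w i : ℕ))) = List.ofFn fun i => ((w i : ℕ)) := rfl
        rw [hll]
        exact sSup_SW_mono htd hBsub (fun a ha => ha) hZBne (letters_ofFn_pos hBsub w)
    _ ≤ ∑' v : Fin n → posNats,
          ENNReal.ofReal (sSup (SW ψ posNats (List.ofFn fun i => ((v i : ℕ))))) :=
        ENNReal.tsum_comp_le_tsum_of_injective hιinj _

lemma pressure_le_posNats {ψ : ℝ → ℝ} (htd : TemperedDistortion ψ) {B : Set ℕ}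
    (hBne : B.Nonempty) (hBsub : B ⊆ posNats) :
    pressure B ψ ≤ pressure posNats ψ := by
  refine Filter.limsup_le_limsup (Filter.Eventually.of_forall fun m => ?_)
    Filter.isCobounded_le_of_bot Filter.isBounded_le_of_top
  apply mul_le_mul_of_nonneg_left
  · exact ENNReal.log_monotone (pressureSum_le_posNats htd hBne hBsub m)
  · exact EReal.coe_nonneg.2 (inv_nonneg.2 (Nat.cast_nonneg m))

/-- Hanus–Mauldin–Urbański continuity property of the pressure:
`P(T, ψ) = sup { P_B(T, ψ) : B a finite nonempty subset of ℕ }`. -/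
theorem pressure_eq_sup_finite_subsystems (ψ : ℝ → ℝ) (htd : TemperedDistortion ψ) :
    pressure posNats ψ =
      sSup {p : EReal | ∃ B : Set ℕ,
        B.Finite ∧ B.Nonempty ∧ B ⊆ posNats ∧ p = pressure B ψ} := by
  set 𝒮 : Set EReal := {p : EReal | ∃ B : Set ℕ,
    B.Finite ∧ B.Nonempty ∧ B ⊆ posNats ∧ p = pressure B ψ} with h𝒮
  have h1sub : ({1} : Set ℕ) ⊆ posNats := by
    intro a ha
    rw [Set.mem_singleton_iff] at ha
    subst ha
    exact le_refl 1
  have hmem1 : pressure ({1} : Set ℕ) ψ ∈ 𝒮 :=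
    ⟨{1}, Set.finite_singleton 1, ⟨1, rfl⟩, h1sub, rfl⟩
  apply le_antisymm
  · by_cases hS : sSup 𝒮 = ⊤
    · rw [hS]; exact le_top
    · have hSbot : sSup 𝒮 ≠ ⊥ := by
        intro h
        have h1 : pressure ({1} : Set ℕ) ψ ≤ sSup 𝒮 := le_sSup hmem1
        have h2 := pressure_ge htd (Set.finite_singleton 1) ⟨1, rfl⟩ h1sub 1 le_rfl
        rw [h] at h1
        exact (EReal.bot_lt_coe _).not_ge (h2.trans h1)
      set s : ℝ := (sSup 𝒮).toReal with hsdef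
      have hs : sSup 𝒮 = (s : EReal) := (EReal.coe_toReal hS hSbot).symm
      have hVt : Filter.Tendsto
          (fun m : ℕ => (m:ℝ)⁻¹ * ∑ j ∈ Finset.range m, Varn ψ (j+1))
          Filter.atTop (nhds 0) := by
        have hshift : Filter.Tendsto (fun j : ℕ => Varn ψ (j+1)) Filter.atTop (nhds 0) :=
          htd.2.comp (Filter.tendsto_add_atTop_nat 1)
        exact hshift.cesaro
      have key : ∀ m : ℕ, 1 ≤ m →
          (((m:ℝ)⁻¹ : ℝ) : EReal) * ENNReal.log (pressureSum posNats ψ m)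
            ≤ (((s + 2*((m:ℝ)⁻¹ * ∑ j ∈ Finset.range m, Varn ψ (j+1))) : ℝ) : EReal) := by
        intro m hm
        have hm0 : (0:ℝ) < (m:ℝ) := by exact_mod_cast hm
        set Vm : ℝ := ∑ j ∈ Finset.range m, Varn ψ (j+1) with hVm
        have hZ : pressureSum posNats ψ m ≤ ENNReal.ofReal (Real.exp (m*s + 2*Vm)) := by
          rw [pressureSum_eq, ENNReal.tsum_eq_iSup_sum]
          apply iSup_le
          intro F
          obtain ⟨B, hfin, hne, hsub, hle⟩ := partialSum_le htd m F
          have hpB : pressure B ψ ≤ (s : EReal) := by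
            rw [← hs]
            exact le_sSup ⟨B, hfin, hne, hsub, rfl⟩
          have h2 := pressure_ge htd hfin hne hsub m hm
          have h3 : (aB ψ B m - Vm)/m ≤ s := EReal.coe_le_coe_iff.1 (h2.trans hpB)
          have h4 : aB ψ B m ≤ m*s + Vm := by
            rw [div_le_iff₀ hm0] at h3
            linarith
          have h5 : pressureSum B ψ m = ENNReal.ofReal (Real.exp (aB ψ B m)) := by
            unfold aB
            rw [Real.exp_log (toReal_pressureSum_pos htd hfin hne hsub m),
              ENNReal.ofReal_toReal (pressureSum_ne_top hfin m)]
          calc ∑ w ∈ F, ENNReal.ofReal (sSup (SW ψ posNats (List.ofFn fun i => ((w i : ℕ)))))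
              ≤ ENNReal.ofReal (Real.exp Vm) * pressureSum B ψ m := hle
            _ ≤ ENNReal.ofReal (Real.exp Vm) * ENNReal.ofReal (Real.exp (m*s+Vm)) := by
                apply mul_le_mul_right
                rw [h5]
                exact ENNReal.ofReal_le_ofReal (Real.exp_le_exp.2 h4)
            _ = ENNReal.ofReal (Real.exp (m*s+2*Vm)) := by
                rw [← ENNReal.ofReal_mul (Real.exp_nonneg _), ← Real.exp_add]
                ring_nf
        have h6 : ENNReal.log (pressureSum posNats ψ m) ≤ ((m*s + 2*Vm : ℝ) : EReal) := by
          refine le_trans (ENNReal.log_monotone hZ) (le_of_eq ?_)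
          rw [ENNReal.log_ofReal_of_pos (Real.exp_pos _), Real.log_exp]
        have h7 := mul_le_mul_of_nonneg_left h6
          (EReal.coe_nonneg.2 (inv_nonneg.2 (Nat.cast_nonneg m)) :
            (0:EReal) ≤ (((m:ℝ)⁻¹ : ℝ) : EReal))
        refine h7.trans (le_of_eq ?_)
        rw [← EReal.coe_mul, EReal.coe_eq_coe_iff]
        field_simp
      have hg : Filter.Tendsto
          (fun m : ℕ => (((s + 2*((m:ℝ)⁻¹ * ∑ j ∈ Finset.range m, Varn ψ (j+1))) : ℝ) : EReal))
          Filter.atTop (nhds ((s : ℝ) : EReal)) := by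
        rw [EReal.tendsto_coe]
        have : Filter.Tendsto
            (fun m : ℕ => s + 2*((m:ℝ)⁻¹ * ∑ j ∈ Finset.range m, Varn ψ (j+1)))
            Filter.atTop (nhds (s + 2*0)) :=
          (tendsto_const_nhds.add ((tendsto_const_nhds.mul hVt)))
        simpa using this
      have hlim : pressure posNats ψ
          ≤ Filter.limsup
            (fun m : ℕ => (((s + 2*((m:ℝ)⁻¹ * ∑ j ∈ Finset.range m, Varn ψ (j+1))) : ℝ) : EReal))
            Filter.atTop := by
        unfold pressure
        refine Filter.limsup_le_limsup ?_ Filter.isCobounded_le_of_bot Filter.isBounded_le_of_top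
        filter_upwards [Filter.eventually_ge_atTop 1] with m hm using key m hm
      rw [hs]
      exact hlim.trans (le_of_eq hg.limsup_eq)
  · apply sSup_le
    rintro p ⟨B, hfin, hne, hsub, rfl⟩
    exact pressure_le_posNats htd hne hsub
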